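/- arXiv:2302.01899 — 5 statements merged into one kernel-verified Lean document; each statement's English description precedes it below -/
import Mathlib

section
/- Let L : ℂ[x] → ℂ be a linear functional admitting monic orthogonal polynomials {p_n}_{n≥0}. Suppose φ ∈ ℂ[x] is monic, ψ ∈ ℂ[x] has deg ψ ≥ 1, and L[φ·Δp] = L[ψ·p] for every p ∈ ℂ[x]. Set s = max(deg φ − 2, deg ψ − 1). Then for every n ∈ ℕ₀ and every polynomial q with deg q < n − s, one has L[φ·Δq·Δp_n] = 0. -/
open Polynomial

/-- The forward difference of a polynomial: `(Δp)(x) = p(x+1) − p(x)`. -/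
noncomputable def polyDelta (p : Polynomial ℂ) : Polynomial ℂ :=
  p.comp (X + C 1) - p

lemma polyDelta_of_natDegree_eq_zero (q : Polynomial ℂ) (hq : q.natDegree = 0) :
    polyDelta q = 0 := by
  rw [eq_C_of_natDegree_eq_zero hq]
  simp [polyDelta]

lemma polyDelta_natDegree_lt (q : Polynomial ℂ) (hq : q.natDegree ≠ 0) :
    (polyDelta q).natDegree < q.natDegree := by
  have hq0 : q ≠ 0 := fun h => hq (by simp [h])
  have hcomp0 : q.comp (X + C 1) ≠ 0 := by
    intro h
    have := natDegree_comp (p := q) (q := X + C (1:ℂ))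
    rw [h, natDegree_X_add_C] at this
    simp at this
    omega
  have hd : (q.comp (X + C 1)).degree = q.degree := by
    rw [degree_eq_natDegree hcomp0, degree_eq_natDegree hq0,
      natDegree_comp, natDegree_X_add_C, mul_one]
  have hlc : (q.comp (X + C 1)).leadingCoeff = q.leadingCoeff := by
    rw [leadingCoeff_comp (by rw [natDegree_X_add_C]; norm_num), leadingCoeff_X_add_C,
      one_pow, mul_one]
  have hlt : (polyDelta q).degree < q.degree := by
    have := degree_sub_lt hd hcomp0 hlc
    rwa [hd] at this
  rcases eq_or_ne (polyDelta q) 0 with h0 | h0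
  · rw [h0]; simpa [natDegree_pos_iff_degree_pos] using Nat.pos_of_ne_zero hq
  · exact natDegree_lt_natDegree h0 (by rwa [degree_eq_natDegree hq0] at hlt ⊢)

lemma polyDelta_mul (a b : Polynomial ℂ) :
    polyDelta (a * b) = a * polyDelta b + polyDelta a * polyDelta b + polyDelta a * b := by
  simp only [polyDelta, mul_comp]
  ring

lemma orth_aux (L : Polynomial ℂ →ₗ[ℂ] ℂ) (p : ℕ → Polynomial ℂ) (h : ℕ → ℂ)
    (hmonic : ∀ n, (p n).Monic) (hdeg : ∀ n, (p n).natDegree = n)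
    (horth : ∀ k n, L (p k * p n) = if k = n then h n else 0)
    (n : ℕ) : ∀ (m : ℕ) (r : Polynomial ℂ), r.natDegree ≤ m → r.natDegree < n →
      L (r * p n) = 0 := by
  intro m
  induction m with
  | zero =>
    intro r hr hrn
    have hr0 : r.natDegree = 0 := Nat.le_zero.mp hr
    have hp0 : p 0 = 1 := (hmonic 0).natDegree_eq_zero.mp (hdeg 0)
    have : r * p n = (r.coeff 0) • (p 0 * p n) := by
      nth_rewrite 1 [eq_C_of_natDegree_eq_zero hr0]
      rw [hp0, smul_eq_C_mul, one_mul]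
    rw [this, map_smul, horth 0 n, if_neg (by omega)]
    simp
  | succ m ih =>
    intro r hr hrn
    rcases Nat.lt_or_ge r.natDegree (m + 1) with hlt | hge
    · exact ih r (by omega) hrn
    have hd : r.natDegree = m + 1 := le_antisymm hr hge
    have hr0 : r ≠ 0 := fun h0 => by simp [h0] at hd
    have hlc : r.leadingCoeff ≠ 0 := leadingCoeff_ne_zero.mpr hr0
    set d := r.natDegree with hdd
    set r' := r - C r.leadingCoeff * p d with hr'
    have hdeg2 : (C r.leadingCoeff * p d).degree = r.degree := by
      rw [degree_C_mul hlc, degree_eq_natDegree hr0,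
        degree_eq_natDegree (hmonic d).ne_zero, hdeg d]
    have hlc2 : r.leadingCoeff = (C r.leadingCoeff * p d).leadingCoeff := by
      rw [leadingCoeff_mul, leadingCoeff_C, (hmonic d).leadingCoeff, mul_one]
    have hlt' : r'.degree < r.degree := degree_sub_lt hdeg2.symm hr0 hlc2
    have hle' : r'.natDegree ≤ m := by
      rw [natDegree_le_iff_degree_le]
      have : r'.degree < (d : WithBot ℕ) := by
        rwa [degree_eq_natDegree hr0] at hlt'
      rcases eq_or_ne r' 0 with h0 | h0
      · simp [h0]
      · rw [degree_eq_natDegree h0] at this ⊢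
        have h2 : r'.natDegree < d := by exact_mod_cast this
        exact_mod_cast (show r'.natDegree ≤ m by omega)
    have hsplit : r * p n = r' * p n + r.leadingCoeff • (p d * p n) := by
      rw [hr', smul_eq_C_mul]; ring
    rw [hsplit, map_add, map_smul, ih r' hle' (lt_of_le_of_lt hle' (by omega)),
      horth d n, if_neg (by omega)]
    simp

/-- If `L` admits monic orthogonal polynomials `{p_n}` and satisfies the Pearson
equation `L[φ·Δp] = L[ψ·p]` with `φ` monic and `deg ψ ≥ 1`, then with
`s = max(deg φ − 2, deg ψ − 1)` one has `L[φ·Δq·Δp_n] = 0` whenever `deg q < n − s`. -/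
theorem semiclassical_orthogonality (L : Polynomial ℂ →ₗ[ℂ] ℂ)
    (p : ℕ → Polynomial ℂ) (h : ℕ → ℂ)
    (hmonic : ∀ n, (p n).Monic) (hdeg : ∀ n, (p n).natDegree = n)
    (hh : ∀ n, h n ≠ 0)
    (horth : ∀ k n, L (p k * p n) = if k = n then h n else 0)
    (φ ψ : Polynomial ℂ) (hφ : φ.Monic) (hψ : 1 ≤ ψ.natDegree)
    (hPearson : ∀ q : Polynomial ℂ, L (φ * polyDelta q) = L (ψ * q))
    (s : ℕ) (hs : s = max (φ.natDegree - 2) (ψ.natDegree - 1)) :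
    ∀ (n : ℕ) (q : Polynomial ℂ), (q.natDegree : ℤ) < (n : ℤ) - (s : ℤ) →
      L (φ * polyDelta q * polyDelta (p n)) = 0 := by
  have hφd : φ.natDegree ≤ s + 2 := by
    have := le_max_left (φ.natDegree - 2) (ψ.natDegree - 1); omega
  have hψd : ψ.natDegree ≤ s + 1 := by
    have := le_max_right (φ.natDegree - 2) (ψ.natDegree - 1); omega
  intro n
  have orth : ∀ r : Polynomial ℂ, r.natDegree < n → L (r * p n) = 0 := fun r hr =>
    orth_aux L p h hmonic hdeg horth n r.natDegree r le_rfl hr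
  suffices H : ∀ (m : ℕ) (q : Polynomial ℂ), q.natDegree ≤ m →
      (q.natDegree : ℤ) < (n : ℤ) - (s : ℤ) →
      L (φ * polyDelta q * polyDelta (p n)) = 0 by
    intro q hq; exact H q.natDegree q le_rfl hq
  intro m
  induction m with
  | zero =>
    intro q hq _
    rw [polyDelta_of_natDegree_eq_zero q (Nat.le_zero.mp hq)]
    simp
  | succ m ih =>
    intro q hq hqn
    rcases Nat.eq_zero_or_pos q.natDegree with h0 | hpos
    · rw [polyDelta_of_natDegree_eq_zero q h0]; simp
    have hΔlt : (polyDelta q).natDegree < q.natDegree :=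
      polyDelta_natDegree_lt q (by omega)
    -- key identity
    have hid : φ * polyDelta q * polyDelta (p n)
        = φ * polyDelta (polyDelta q * p n)
          - φ * polyDelta (polyDelta q) * p n
          - φ * polyDelta (polyDelta q) * polyDelta (p n) := by
      rw [polyDelta_mul]; ring
    rw [hid, map_sub, map_sub, hPearson (polyDelta q * p n)]
    -- three terms
    have h1 : L (ψ * (polyDelta q * p n)) = 0 := by
      have : (ψ * polyDelta q).natDegree < n := by
        calc (ψ * polyDelta q).natDegree ≤ ψ.natDegree + (polyDelta q).natDegree :=
              natDegree_mul_le
          _ < n := by omega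
      have := orth (ψ * polyDelta q) this
      rwa [mul_assoc] at this
    have h2 : L (φ * polyDelta (polyDelta q) * p n) = 0 := by
      rcases eq_or_ne (polyDelta (polyDelta q)) 0 with hz | hz
      · simp [hz]
      have hΔΔ : (polyDelta (polyDelta q)).natDegree < (polyDelta q).natDegree := by
        apply polyDelta_natDegree_lt
        intro h0'
        exact hz (polyDelta_of_natDegree_eq_zero _ h0')
      have : (φ * polyDelta (polyDelta q)).natDegree < n := by
        calc (φ * polyDelta (polyDelta q)).natDegree
            ≤ φ.natDegree + (polyDelta (polyDelta q)).natDegree := natDegree_mul_le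
          _ < n := by omega
      exact orth _ this
    have h3 : L (φ * polyDelta (polyDelta q) * polyDelta (p n)) = 0 :=
      ih (polyDelta q) (by omega) (by push_cast; omega)
    rw [h1, h2, h3]
    ring
end

section
/- Let L : ℂ[x] → ℂ be a linear functional admitting monic orthogonal polynomials {p_n}_{n≥0}, let φ ∈ ℂ[x] be monic with deg φ = d₁, and let s ∈ ℕ₀. Suppose that for every integer n > s there exist complex numbers ε_{n,k} (n − s ≤ k ≤ n + d₁) such that φ·Δp_{n+1} = ∑_{k=n−s}^{n+d₁} ε_{n,k} p_k. Then there exists a polynomial ψ ∈ ℂ[x] with deg ψ ≤ s + 1 such that L[φ·Δp] = L[ψ·p] for every p ∈ ℂ[x], i.e., L satisfies the Pearson equation Δ*(φL) + ψL = 0. -/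
open Polynomial

lemma polyDelta_add (a b : Polynomial ℂ) : polyDelta (a + b) = polyDelta a + polyDelta b := by
  simp [polyDelta, add_comp]; ring

lemma polyDelta_smul (c : ℂ) (a : Polynomial ℂ) : polyDelta (c • a) = c • polyDelta a := by
  simp [polyDelta, smul_sub]

/-- Converse of the structure relation: if `L` admits MOPs `{p_n}`, `φ` is monic of
degree `d₁`, and for every `n > s` one has `φ·Δp_{n+1} = ∑_{k=n−s}^{n+d₁} ε_{n,k} p_k`,
then there is a polynomial `ψ` with `deg ψ ≤ s + 1` such that `L[φ·Δp] = L[ψ·p]`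
for every polynomial `p`, i.e. `Δ*(φL) + ψL = 0`. -/
theorem semiclassical_of_structure_relation (L : Polynomial ℂ →ₗ[ℂ] ℂ)
    (p : ℕ → Polynomial ℂ) (h : ℕ → ℂ)
    (hmonic : ∀ n, (p n).Monic) (hdeg : ∀ n, (p n).natDegree = n)
    (hh : ∀ n, h n ≠ 0)
    (horth : ∀ k n, L (p k * p n) = if k = n then h n else 0)
    (φ : Polynomial ℂ) (hφ : φ.Monic) (s : ℕ)
    (hstruct : ∀ n : ℕ, s < n → ∃ ε : ℕ → ℂ,
      φ * polyDelta (p (n + 1)) =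
        ∑ k ∈ Finset.Icc (n - s) (n + φ.natDegree), C (ε k) * p k) :
    ∃ ψ : Polynomial ℂ, ψ.natDegree ≤ s + 1 ∧
      ∀ q : Polynomial ℂ, L (φ * polyDelta q) = L (ψ * q) := by
  have hp0 : p 0 = 1 := (Polynomial.Monic.natDegree_eq_zero (hmonic 0)).mp (hdeg 0)
  set ψ : Polynomial ℂ :=
    ∑ j ∈ Finset.range (s + 2), C (L (φ * polyDelta (p j)) / h j) * p j with hψ
  have hψdeg : ψ.natDegree ≤ s + 1 := by
    apply Polynomial.natDegree_sum_le_of_forall_le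
    intro j hj
    have hj' := Finset.mem_range.mp hj
    calc (C (L (φ * polyDelta (p j)) / h j) * p j).natDegree
        ≤ (p j).natDegree := natDegree_C_mul_le _ _
      _ ≤ s + 1 := by rw [hdeg]; omega
  -- key computation on basis elements
  have key : ∀ m : ℕ, L (φ * polyDelta (p m)) = L (ψ * p m) := by
    intro m
    have hRHS : L (ψ * p m) =
        ∑ j ∈ Finset.range (s + 2),
          (L (φ * polyDelta (p j)) / h j) * (if j = m then h m else 0) := by
      rw [hψ, Finset.sum_mul, map_sum]
      refine Finset.sum_congr rfl fun j _ => ?_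
      rw [mul_assoc, ← smul_eq_C_mul, map_smul, smul_eq_mul, horth]
    by_cases hm : m ≤ s + 1
    · rw [hRHS, Finset.sum_eq_single m]
      · simp [div_mul_cancel₀ _ (hh m)]
      · intro j _ hjm; simp [hjm]
      · intro hmem; exact absurd (Finset.mem_range.mpr (by omega)) hmem
    · -- m ≥ s + 2
      have hRHS0 : L (ψ * p m) = 0 := by
        rw [hRHS]
        apply Finset.sum_eq_zero
        intro j hj
        have : j ≠ m := by have := Finset.mem_range.mp hj; omega
        simp [this]
      rw [hRHS0]
      obtain ⟨n, rfl⟩ : ∃ n, m = n + 1 := ⟨m - 1, by omega⟩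
      obtain ⟨ε, hε⟩ := hstruct n (by omega)
      rw [hε, map_sum]
      apply Finset.sum_eq_zero
      intro k hk
      have hk1 : k ≠ 0 := by
        have := (Finset.mem_Icc.mp hk).1; omega
      have : L (p k) = 0 := by
        have := horth k 0
        rw [hp0, mul_one] at this
        simpa [hk1] using this
      rw [← smul_eq_C_mul, map_smul, this, smul_eq_mul, mul_zero]
  refine ⟨ψ, hψdeg, ?_⟩
  -- extend to all polynomials by induction on a degree bound
  have main : ∀ n : ℕ, ∀ q : Polynomial ℂ, q.natDegree ≤ n →
      L (φ * polyDelta q) = L (ψ * q) := by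
    intro n
    induction n with
    | zero =>
      intro q hq
      have hqc : q = q.coeff 0 • p 0 := by
        rw [hp0, smul_eq_C_mul, mul_one, Polynomial.eq_C_of_natDegree_le_zero hq]
        simp
      rw [hqc, polyDelta_smul, mul_smul_comm, map_smul, mul_smul_comm, map_smul, key 0]
    | succ n ih =>
      intro q hq
      by_cases h0 : q = 0
      · simp [h0, polyDelta]
      by_cases hqn : q.natDegree ≤ n
      · exact ih q hqn
      have hqd : q.natDegree = n + 1 := by omega
      set c := q.leadingCoeff with hc
      set r := q - c • p (n + 1) with hr
      have hqr : q = c • p (n + 1) + r := by rw [hr]; ring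
      have hLr : L (φ * polyDelta r) = L (ψ * r) := by
        by_cases hr0 : r = 0
        · simp [hr0, polyDelta]
        · have hcne : c ≠ 0 := by simpa [hc] using leadingCoeff_ne_zero.mpr h0
          have hdq : q.degree = ((n + 1 : ℕ) : WithBot ℕ) := by
            rw [← hqd]; exact degree_eq_natDegree h0
          have hlc : q.leadingCoeff = (c • p (n + 1)).leadingCoeff := by
            rw [smul_eq_C_mul, leadingCoeff_mul, leadingCoeff_C,
              (hmonic (n + 1)).leadingCoeff, mul_one]
          have hdcp : (c • p (n + 1)).degree = q.degree := by
            rw [smul_eq_C_mul, degree_C_mul hcne,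
              degree_eq_natDegree (hmonic (n + 1)).ne_zero, hdeg, hdq]
          have hlt := degree_sub_lt hdcp.symm h0 hlc
          rw [hdq] at hlt
          have : r.natDegree < n + 1 :=
            (natDegree_lt_iff_degree_lt hr0).mpr (by exact_mod_cast hlt)
          exact ih r (by omega)
      rw [hqr, polyDelta_add, polyDelta_smul, mul_add, mul_smul_comm, map_add, map_smul,
        mul_add, mul_smul_comm, map_add, map_smul, hLr, key (n + 1)]
  intro q
  exact main q.natDegree q le_rfl
end

section
/- Let {L₀, L₁} be a Δ-coherent pair of the second kind with MOPs {P_n^{(0)}}, {P_n^{(1)}}, normalizations h_n^{(0)}, h_n^{(1)}, and coherence coefficients τ_n. For i = 0, 1 define the linear functionals v_n^{(i)} = (P_n^{(i)}/h_n^{(i)}) L_i, i.e., v_n^{(i)}[p] = L_i[P_n^{(i)} p]/h_n^{(i)}. Then for every n ∈ ℕ₀, Δ* v_n^{(1)} = τ_{n+1}(n+2) v_{n+2}^{(0)} − (n+1) v_{n+1}^{(0)}; equivalently, for every p ∈ ℂ[x], −L₁[P_n^{(1)}·Δp]/h_n^{(1)} = τ_{n+1}(n+2) L₀[P_{n+2}^{(0)}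 p]/h_{n+2}^{(0)} − (n+1) L₀[P_{n+1}^{(0)} p]/h_{n+1}^{(0)}. -/
/-! Both sides are linear functionals and the monic family `P₀` spans `ℂ[x]`, so it suffices to
evaluate them at `P₀ m`. By orthogonality of `P₀`, the right side there is
`τ_{n+1}(n+2) δ_{n+2,m} − (n+1) δ_{n+1,m}`; on the left, the coherence relation writes `ΔP₀ m` as
`m (P₁ (m-1) − τ_{m-1} P₁ (m-2))`, and orthogonality of `P₁` gives the same Kronecker deltas. -/

open Polynomial

theorem Polynomial.span_range_eq_top_of_monic {R : Type*} [Ring R] [Nontrivial R]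
    {P : ℕ → R[X]} (hmonic : ∀ n, (P n).Monic) (hdeg : ∀ n, (P n).natDegree = n) :
    Submodule.span R (Set.range P) = ⊤ :=
  let S : Sequence R := ⟨P, fun n => by rw [degree_eq_natDegree (hmonic n).ne_zero, hdeg]⟩
  S.span fun n => (hmonic n).leadingCoeff ▸ isUnit_one

theorem polyDelta_C (c : ℂ) : polyDelta (C c) = 0 := by
  simp [polyDelta]

theorem polyDelta_X_add_C (c : ℂ) : polyDelta (X + C c) = 1 := by
  simp only [polyDelta, add_comp, X_comp, C_comp, map_one]
  ring

noncomputable def polyDeltaₗ : ℂ[X] →ₗ[ℂ] ℂ[X] where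
  toFun := polyDelta
  map_add' p q := by simp only [polyDelta, add_comp]; ring
  map_smul' c p := by simp only [polyDelta, smul_comp, RingHom.id_apply, smul_sub]

/-- The functional `Δ* v`. -/
noncomputable def polyDeltaDual (v : ℂ[X] →ₗ[ℂ] ℂ) : ℂ[X] →ₗ[ℂ] ℂ :=
  -(v ∘ₗ polyDeltaₗ)

theorem polyDeltaDual_apply (v : ℂ[X] →ₗ[ℂ] ℂ) (p : ℂ[X]) :
    polyDeltaDual v p = -v (polyDelta p) :=
  rfl

section DualFunctional

variable {K : Type*} [Field K] {L : K[X] →ₗ[K] K} {P : ℕ → K[X]} {h : ℕ → K}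

/-- The functional `v_n = (P n / h n) L`; for an orthogonal family these form the dual basis of
`P`. -/
noncomputable def dualFunctional (L : K[X] →ₗ[K] K) (P : ℕ → K[X]) (h : ℕ → K) (n : ℕ) :
    K[X] →ₗ[K] K :=
  (h n)⁻¹ • (L ∘ₗ LinearMap.mulLeft K (P n))

theorem dualFunctional_apply (n : ℕ) (p : K[X]) :
    dualFunctional L P h n p = L (P n * p) / h n := by
  simp [dualFunctional, div_eq_inv_mul]

theorem dualFunctional_apply_of_orthogonal
    (horth : ∀ k n, L (P k * P n) = if k = n then h n else 0) {n : ℕ} (hh : h n ≠ 0) (m : ℕ) :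
    dualFunctional L P h n (P m) = if n = m then 1 else 0 := by
  rw [dualFunctional_apply, horth]
  split_ifs with hnm
  · subst hnm
    exact div_self hh
  · exact zero_div _

end DualFunctional

theorem polyDeltaDual_dualFunctional_eq {L₀ L₁ : ℂ[X] →ₗ[ℂ] ℂ}
    {P₀ P₁ : ℕ → ℂ[X]} {h₀ h₁ : ℕ → ℂ} {τ : ℕ → ℂ}
    (hmonic₀ : ∀ n, (P₀ n).Monic) (hdeg₀ : ∀ n, (P₀ n).natDegree = n)
    (hP₁_zero : P₁ 0 = 1) (hh₀ : ∀ n, h₀ n ≠ 0) (hh₁ : ∀ n, h₁ n ≠ 0)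
    (horth₀ : ∀ k n, L₀ (P₀ k * P₀ n) = if k = n then h₀ n else 0)
    (horth₁ : ∀ k n, L₁ (P₁ k * P₁ n) = if k = n then h₁ n else 0)
    (hcoh : ∀ n : ℕ, 1 ≤ n →
      polyDelta (P₀ (n + 1)) = C ((n : ℂ) + 1) * (P₁ n - C (τ n) * P₁ (n - 1))) (n : ℕ) :
    polyDeltaDual (dualFunctional L₁ P₁ h₁ n) =
      (τ (n + 1) * ((n : ℂ) + 2)) • dualFunctional L₀ P₀ h₀ (n + 2) -
        ((n : ℂ) + 1) • dualFunctional L₀ P₀ h₀ (n + 1) := by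
  refine LinearMap.ext_on_range (span_range_eq_top_of_monic hmonic₀ hdeg₀) fun m => ?_
  simp only [polyDeltaDual_apply, LinearMap.sub_apply, LinearMap.smul_apply, smul_eq_mul,
    dualFunctional_apply_of_orthogonal horth₀ (hh₀ _)]
  rcases m with _ | _ | k
  · rw [eq_C_of_natDegree_eq_zero (hdeg₀ 0), polyDelta_C, map_zero]
    simp
  · -- the coherence relation starts at `n = 1`; here `Δ P₀ 1 = 1 = P₁ 0` instead
    rw [(hmonic₀ 1).eq_X_add_C (hdeg₀ 1), polyDelta_X_add_C, ← hP₁_zero,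
      dualFunctional_apply_of_orthogonal horth₁ (hh₁ n)]
    split_ifs <;> first | omega | (subst_vars; simp)
  · rw [hcoh (k + 1) le_add_self, Nat.add_sub_cancel, ← smul_eq_C_mul, ← smul_eq_C_mul,
      map_smul, map_sub, map_smul, dualFunctional_apply_of_orthogonal horth₁ (hh₁ n),
      dualFunctional_apply_of_orthogonal horth₁ (hh₁ n)]
    split_ifs <;> first | omega | (subst_vars; push_cast; ring)

theorem dual_functional_relation_general (L₀ L₁ : Polynomial ℂ →ₗ[ℂ] ℂ)
    (P₀ P₁ : ℕ → Polynomial ℂ) (h₀ h₁ : ℕ → ℂ) (τ : ℕ → ℂ)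
    (hmonic₀ : ∀ n, (P₀ n).Monic) (hdeg₀ : ∀ n, (P₀ n).natDegree = n)
    (hmonic₁ : ∀ n, (P₁ n).Monic) (hdeg₁ : ∀ n, (P₁ n).natDegree = n)
    (hh₀ : ∀ n, h₀ n ≠ 0) (hh₁ : ∀ n, h₁ n ≠ 0)
    (horth₀ : ∀ k n, L₀ (P₀ k * P₀ n) = if k = n then h₀ n else 0)
    (horth₁ : ∀ k n, L₁ (P₁ k * P₁ n) = if k = n then h₁ n else 0)
    (hcoh : ∀ n : ℕ, 1 ≤ n →
      polyDelta (P₀ (n + 1)) = C ((n : ℂ) + 1) * (P₁ n - C (τ n) * P₁ (n - 1))) :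
    ∀ (n : ℕ) (p : Polynomial ℂ),
      -(L₁ (P₁ n * polyDelta p)) / h₁ n =
        τ (n + 1) * ((n : ℂ) + 2) * L₀ (P₀ (n + 2) * p) / h₀ (n + 2) -
          ((n : ℂ) + 1) * L₀ (P₀ (n + 1) * p) / h₀ (n + 1) := by
  intro n p
  have hP₁_zero : P₁ 0 = 1 := (hmonic₁ 0).natDegree_eq_zero.mp (hdeg₁ 0)
  have := LinearMap.congr_fun
    (polyDeltaDual_dualFunctional_eq hmonic₀ hdeg₀ hP₁_zero hh₀ hh₁ horth₀ horth₁ hcoh n) p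
  simp only [polyDeltaDual_apply, LinearMap.sub_apply, LinearMap.smul_apply, smul_eq_mul,
    dualFunctional_apply] at this
  rw [neg_div, this, mul_div_assoc, mul_div_assoc]

/-- If `{L₀, L₁}` is a `Δ`-coherent pair of the second kind with MOPs `{P_n^{(0)}}`,
`{P_n^{(1)}}`, normalizations `h_n^{(0)}`, `h_n^{(1)}` and coherence coefficients
`τ_n`, then the dual functionals `v_n^{(i)} = (P_n^{(i)}/h_n^{(i)}) L_i` satisfy
`Δ* v_n^{(1)} = τ_{n+1}(n+2) v_{n+2}^{(0)} − (n+1) v_{n+1}^{(0)}` for all `n ∈ ℕ₀`. -/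
theorem dual_functional_relation (L₀ L₁ : Polynomial ℂ →ₗ[ℂ] ℂ)
    (P₀ P₁ : ℕ → Polynomial ℂ) (h₀ h₁ : ℕ → ℂ) (τ : ℕ → ℂ)
    (hmonic₀ : ∀ n, (P₀ n).Monic) (hdeg₀ : ∀ n, (P₀ n).natDegree = n)
    (hmonic₁ : ∀ n, (P₁ n).Monic) (hdeg₁ : ∀ n, (P₁ n).natDegree = n)
    (hh₀ : ∀ n, h₀ n ≠ 0) (hh₁ : ∀ n, h₁ n ≠ 0)
    (horth₀ : ∀ k n, L₀ (P₀ k * P₀ n) = if k = n then h₀ n else 0)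
    (horth₁ : ∀ k n, L₁ (P₁ k * P₁ n) = if k = n then h₁ n else 0)
    (hτ : ∀ n : ℕ, 1 ≤ n → τ n ≠ 0)
    (hcoh : ∀ n : ℕ, 1 ≤ n →
      polyDelta (P₀ (n + 1)) = C ((n : ℂ) + 1) * (P₁ n - C (τ n) * P₁ (n - 1))) :
    ∀ (n : ℕ) (p : Polynomial ℂ),
      -(L₁ (P₁ n * polyDelta p)) / h₁ n =
        τ (n + 1) * ((n : ℂ) + 2) * L₀ (P₀ (n + 2) * p) / h₀ (n + 2) -
          ((n : ℂ) + 1) * L₀ (P₀ (n + 1) * p) / h₀ (n + 1) :=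
  dual_functional_relation_general L₀ L₁ P₀ P₁ h₀ h₁ τ hmonic₀ hdeg₀ hmonic₁ hdeg₁ hh₀ hh₁ horth₀
    horth₁ hcoh
end

section
/- Let {L₀, L₁} be a Δ-coherent pair of the second kind. Then there exist polynomials Λ₂, Λ₃ ∈ ℂ[x] with deg Λ₂ = 2 and deg Λ₃ ≤ 3, whose coefficients λ₂^{(2)} (the coefficient of x² in Λ₂) and λ₃^{(3)} (the coefficient of x³ in Λ₃) satisfy λ₂^{(2)} + (n−1)λ₃^{(3)} ≠ 0 for every n ≥ 1, such that Δ*L₁ = Λ₂L₀ and L₁ = Λ₃L₀; that is, L₁[Δp] = −L₀[Λ₂·p] and L₁[p] = L₀[Λ₃·p] for every p ∈ ℂ[x]. -/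
/-!
For a sequence `Pₙ` of monic orthogonal polynomials, `L (q * Pₙ) = qₙ hₙ` whenever `deg q ≤ n`;
hence a functional `M` vanishing on all `Pₙ` with `n > N` equals `L (Λ · )` for the polynomial
`Λ = ∑_{k ≤ N} (M Pₖ / hₖ) Pₖ` of degree `≤ N`. The coherence relation makes `L₁ ∘ Δ` vanish on
`Pₙ⁽⁰⁾` for `n ≥ 3`, which gives `Λ₂`; writing `Pₙ⁽⁰⁾ = Δ(x Pₙ⁽⁰⁾) − (x + 1) ΔPₙ⁽⁰⁾` then shows
that `L₁` vanishes on `Pₙ⁽⁰⁾` for `n ≥ 4`, which gives `Λ₃`. Finally, by the product rule for `Δ`,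
`L₀ ((Λ₂ r + Λ₃ Δr) Pₙ₊₁⁽⁰⁾) = −L₁ (r(x+1) ΔPₙ₊₁⁽⁰⁾)`; for `r = x^{n−1}` the left side is
`(λ₂⁽²⁾ + (n−1) λ₃⁽³⁾) hₙ₊₁⁽⁰⁾` and the right side is `(n+1) τₙ hₙ₋₁⁽¹⁾ ≠ 0`.
-/

open Polynomial

namespace Polynomial

structure IsMonicOrthogonal {K : Type*} [Field K] (L : K[X] →ₗ[K] K) (P : ℕ → K[X])
    (h : ℕ → K) : Prop where
  monic : ∀ n, (P n).Monic
  natDegree_eq : ∀ n, (P n).natDegree = n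
  apply_mul : ∀ k n, L (P k * P n) = if k = n then h n else 0

namespace IsMonicOrthogonal

variable {K : Type*} [Field K] {L : K[X] →ₗ[K] K} {P : ℕ → K[X]} {h : ℕ → K}

noncomputable def toSequence (hP : IsMonicOrthogonal L P h) : Sequence K where
  elems' := P
  degree_eq' n := by rw [degree_eq_natDegree (hP.monic n).ne_zero, hP.natDegree_eq n]

@[simp]
theorem toSequence_apply (hP : IsMonicOrthogonal L P h) (n : ℕ) : hP.toSequence n = P n := rfl

theorem isUnit_leadingCoeff (hP : IsMonicOrthogonal L P h) (n : ℕ) :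
    IsUnit (hP.toSequence n).leadingCoeff := by
  rw [toSequence_apply, (hP.monic n).leadingCoeff]
  exact isUnit_one

theorem coeff_self (hP : IsMonicOrthogonal L P h) (n : ℕ) : (P n).coeff n = 1 := by
  simpa [hP.natDegree_eq n] using (hP.monic n).coeff_natDegree

theorem apply_mul_eq_zero_of_degree_lt (hP : IsMonicOrthogonal L P h) {q : K[X]} {n : ℕ}
    (hq : q.degree < n) : L (q * P n) = 0 := by
  have hspan : q ∈ Submodule.span K (hP.toSequence '' Set.Iio n) := by
    rw [hP.toSequence.span_degreeLT fun i _ => hP.isUnit_leadingCoeff i]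
    exact mem_degreeLT.2 hq
  have hker : Submodule.span K (hP.toSequence '' Set.Iio n) ≤
      LinearMap.ker (L ∘ₗ LinearMap.mulRight K (P n)) := by
    rw [Submodule.span_le]
    rintro _ ⟨k, hk, rfl⟩
    simp [hP.apply_mul, (Set.mem_Iio.1 hk).ne]
  simpa using hker hspan

theorem apply_mul_eq_coeff_mul (hP : IsMonicOrthogonal L P h) {q : K[X]} {n : ℕ}
    (hq : q.natDegree ≤ n) : L (q * P n) = q.coeff n * h n := by
  have hlow : (q - C (q.coeff n) * P n).degree < n := by
    rw [degree_lt_iff_coeff_zero]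
    intro m hm
    rcases hm.eq_or_lt with rfl | hlt
    · simp [hP.coeff_self]
    · rw [coeff_sub, coeff_C_mul, coeff_eq_zero_of_natDegree_lt (hq.trans_lt hlt),
        coeff_eq_zero_of_natDegree_lt ((hP.natDegree_eq n).trans_lt hlt), mul_zero, sub_zero]
  have hsplit : q * P n = (q - C (q.coeff n) * P n) * P n + q.coeff n • (P n * P n) := by
    rw [smul_eq_C_mul]
    ring
  rw [hsplit, map_add, map_smul, hP.apply_mul_eq_zero_of_degree_lt hlow, hP.apply_mul,
    if_pos rfl, smul_eq_mul, zero_add]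

theorem apply_monic_mul (hP : IsMonicOrthogonal L P h) {q : K[X]} {n : ℕ} (hq : q.Monic)
    (hqn : q.natDegree = n) : L (q * P n) = h n := by
  rw [hP.apply_mul_eq_coeff_mul hqn.le, ← hqn, hq.coeff_natDegree, one_mul]

theorem apply_mul_sub_eq_zero (hP : IsMonicOrthogonal L P h) (t : K) {q : K[X]} {m : ℕ}
    (hq : q.degree < m) : L (q * (P (m + 1) - C t * P m)) = 0 := by
  have hq' : q.degree < ↑(m + 1) := hq.trans (by exact_mod_cast m.lt_succ_self)
  rw [show q * (P (m + 1) - C t * P m) = q * P (m + 1) - t • (q * P m) by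
      rw [smul_eq_C_mul]; ring,
    map_sub, map_smul, hP.apply_mul_eq_zero_of_degree_lt hq,
    hP.apply_mul_eq_zero_of_degree_lt hq', smul_zero, sub_zero]

theorem apply_monic_mul_sub (hP : IsMonicOrthogonal L P h) (t : K) {q : K[X]} {m : ℕ}
    (hq : q.Monic) (hqm : q.natDegree = m) : L (q * (P (m + 1) - C t * P m)) = -(t * h m) := by
  have hlt : q.degree < ↑(m + 1) :=
    (degree_le_of_natDegree_le hqm.le).trans_lt (by exact_mod_cast m.lt_succ_self)
  rw [show q * (P (m + 1) - C t * P m) = q * P (m + 1) - t • (q * P m) by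
      rw [smul_eq_C_mul]; ring,
    map_sub, map_smul, hP.apply_mul_eq_zero_of_degree_lt hlt, hP.apply_monic_mul hq hqm,
    smul_eq_mul, zero_sub]

theorem exists_apply_eq_apply_mul (hP : IsMonicOrthogonal L P h) (hh : ∀ n, h n ≠ 0)
    {M : K[X] →ₗ[K] K} {N : ℕ} (hM : ∀ n, N < n → M (P n) = 0) :
    ∃ Λ : K[X], Λ.natDegree ≤ N ∧ ∀ p, M p = L (Λ * p) := by
  set Λ := ∑ k ∈ Finset.range (N + 1), (M (P k) / h k) • P k
  refine ⟨Λ, natDegree_sum_le_of_forall_le _ _ fun k hk => ?_, fun p => ?_⟩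
  · exact (natDegree_smul_le _ _).trans
      ((hP.natDegree_eq k).trans_le (Nat.lt_succ_iff.1 (Finset.mem_range.1 hk)))
  suffices hML : M = L ∘ₗ LinearMap.mulLeft K Λ from LinearMap.congr_fun hML p
  refine LinearMap.ext_on_range (hP.toSequence.span hP.isUnit_leadingCoeff) fun n => ?_
  simp only [toSequence_apply, LinearMap.comp_apply, LinearMap.mulLeft_apply, Λ,
    Finset.sum_mul, smul_mul_assoc, map_sum, map_smul, hP.apply_mul, smul_eq_mul, mul_ite,
    mul_zero, Finset.sum_ite_eq', Finset.mem_range]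
  split_ifs with hn
  · rw [div_mul_cancel₀ _ (hh n)]
  · exact hM n (by omega)

end IsMonicOrthogonal

end Polynomial

noncomputable def polyDeltaLinearMap : ℂ[X] →ₗ[ℂ] ℂ[X] :=
  (aeval (X + C 1)).toLinearMap - LinearMap.id

@[simp]
theorem polyDeltaLinearMap_apply (p : ℂ[X]) : polyDeltaLinearMap p = polyDelta p := by
  simp [polyDeltaLinearMap, polyDelta, comp_eq_aeval]

theorem polyDelta_mul_s7 (p q : ℂ[X]) :
    polyDelta (p * q) = polyDelta p * q + p.comp (X + C 1) * polyDelta q := by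
  simp only [polyDelta, mul_comp]
  ring

theorem polyDelta_one : polyDelta 1 = 0 := by
  simp [polyDelta]

theorem polyDelta_X : polyDelta X = 1 := by
  simp [polyDelta]

theorem polyDelta_X_pow_succ (m : ℕ) :
    polyDelta (X ^ (m + 1)) = (X + 1) ^ (m + 1) - X ^ (m + 1) := by
  rw [polyDelta, X_pow_comp, C_1]

theorem natDegree_polyDelta_X_pow_succ_le (m : ℕ) : (polyDelta (X ^ (m + 1))).natDegree ≤ m := by
  rw [natDegree_le_iff_coeff_eq_zero]
  intro k hk
  rw [polyDelta_X_pow_succ, coeff_sub, coeff_X_add_one_pow, coeff_X_pow]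
  rcases (Nat.succ_le_of_lt hk).eq_or_lt with rfl | hlt
  · simp
  · simp [Nat.choose_eq_zero_of_lt hlt, hlt.ne']

theorem coeff_polyDelta_X_pow_succ (m : ℕ) : (polyDelta (X ^ (m + 1))).coeff m = m + 1 := by
  rw [polyDelta_X_pow_succ, coeff_sub, coeff_X_add_one_pow, coeff_X_pow,
    Nat.choose_succ_self_right, if_neg m.succ_ne_self.symm]
  push_cast
  ring

theorem natDegree_le_and_coeff_mul_X_pow_add_mul_polyDelta {Λ₂ Λ₃ : ℂ[X]}
    (hΛ₂ : Λ₂.natDegree ≤ 2) (hΛ₃ : Λ₃.natDegree ≤ 3) (m : ℕ) :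
    (Λ₂ * X ^ m + Λ₃ * polyDelta (X ^ m)).natDegree ≤ m + 2 ∧
      (Λ₂ * X ^ m + Λ₃ * polyDelta (X ^ m)).coeff (m + 2) = Λ₂.coeff 2 + m * Λ₃.coeff 3 := by
  cases m with
  | zero => simpa [polyDelta_one] using hΛ₂
  | succ k =>
    have hX : (X ^ (k + 1) : ℂ[X]).natDegree ≤ k + 1 := natDegree_X_pow_le _
    have hΔ := natDegree_polyDelta_X_pow_succ_le k
    refine ⟨natDegree_add_le_of_degree_le (natDegree_mul_le.trans (by omega))
      (natDegree_mul_le.trans (by omega)), ?_⟩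
    rw [coeff_add, show k + 1 + 2 = 2 + (k + 1) by ring, coeff_mul_add_eq_of_natDegree_le hΛ₂ hX,
      show 2 + (k + 1) = 3 + k by ring, coeff_mul_add_eq_of_natDegree_le hΛ₃ hΔ,
      coeff_X_pow_self, coeff_polyDelta_X_pow_succ]
    push_cast
    ring

theorem apply_mul_add_mul_polyDelta {L₀ L₁ : ℂ[X] →ₗ[ℂ] ℂ} {Λ₂ Λ₃ : ℂ[X]}
    (rel₂ : ∀ p, L₁ (polyDelta p) = -L₀ (Λ₂ * p)) (rel₃ : ∀ p, L₁ p = L₀ (Λ₃ * p))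
    (r s : ℂ[X]) :
    L₀ ((Λ₂ * r + Λ₃ * polyDelta r) * s) = -L₁ (r.comp (X + C 1) * polyDelta s) := by
  rw [add_mul, map_add, mul_assoc, mul_assoc, ← rel₃, neg_eq_iff_eq_neg.1 (rel₂ (r * s)).symm,
    polyDelta_mul_s7, map_add]
  ring

/-- The coherence relation `ΔP⁽⁰⁾ₙ₊₁ = (n + 1)(P⁽¹⁾ₙ − τₙ P⁽¹⁾ₙ₋₁)`, `n ≥ 1`, reindexed by
`n = m + 1` to avoid truncated subtraction. -/
def DeltaCoherent (P₀ P₁ : ℕ → ℂ[X]) (τ : ℕ → ℂ) : Prop :=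
  ∀ m : ℕ, polyDelta (P₀ (m + 2)) = C ((m : ℂ) + 2) * (P₁ (m + 1) - C (τ (m + 1)) * P₁ m)

namespace DeltaCoherent

variable {L₀ L₁ : ℂ[X] →ₗ[ℂ] ℂ} {P₀ P₁ : ℕ → ℂ[X]} {h₀ h₁ τ : ℕ → ℂ}

theorem apply_mul_polyDelta_eq_zero (hcoh : DeltaCoherent P₀ P₁ τ)
    (O₁ : IsMonicOrthogonal L₁ P₁ h₁) {q : ℂ[X]} {m : ℕ} (hq : q.degree < m) : L₁ (q * polyDelta (P₀ (m + 2))) = 0 := by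
  rw [hcoh m, mul_left_comm, ← smul_eq_C_mul, map_smul, O₁.apply_mul_sub_eq_zero _ hq, smul_zero]

theorem apply_monic_mul_polyDelta (hcoh : DeltaCoherent P₀ P₁ τ)
    (O₁ : IsMonicOrthogonal L₁ P₁ h₁) {q : ℂ[X]} {m : ℕ} (hq : q.Monic) (hqm : q.natDegree = m) :
    L₁ (q * polyDelta (P₀ (m + 2))) = -((m + 2) * τ (m + 1) * h₁ m) := by
  rw [hcoh m, mul_left_comm, ← smul_eq_C_mul, map_smul, O₁.apply_monic_mul_sub _ hq hqm,
    smul_eq_mul]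
  ring

theorem exists_apply_polyDelta_eq (hcoh : DeltaCoherent P₀ P₁ τ)
    (O₀ : IsMonicOrthogonal L₀ P₀ h₀) (hh₀ : ∀ n, h₀ n ≠ 0) (O₁ : IsMonicOrthogonal L₁ P₁ h₁) :
    ∃ Λ₂ : ℂ[X], Λ₂.natDegree ≤ 2 ∧ ∀ p, L₁ (polyDelta p) = -L₀ (Λ₂ * p) := by
  obtain ⟨Λ₂, hdeg, hΛ₂⟩ :=
    O₀.exists_apply_eq_apply_mul hh₀ (M := -(L₁ ∘ₗ polyDeltaLinearMap)) (N := 2) fun n hn => by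
      obtain ⟨m, rfl⟩ : ∃ m, n = m + 1 + 2 := ⟨n - 3, by omega⟩
      have hone : (1 : ℂ[X]).degree < ↑(m + 1) := by
        rw [degree_one]
        exact_mod_cast m.succ_pos
      simpa using hcoh.apply_mul_polyDelta_eq_zero O₁ hone
  exact ⟨Λ₂, hdeg, fun p => by simpa [neg_eq_iff_eq_neg] using hΛ₂ p⟩

theorem exists_apply_eq (hcoh : DeltaCoherent P₀ P₁ τ)
    (O₀ : IsMonicOrthogonal L₀ P₀ h₀) (hh₀ : ∀ n, h₀ n ≠ 0) (O₁ : IsMonicOrthogonal L₁ P₁ h₁)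
    {Λ₂ : ℂ[X]} (hΛ₂ : Λ₂.natDegree ≤ 2) (rel₂ : ∀ p, L₁ (polyDelta p) = -L₀ (Λ₂ * p)) :
    ∃ Λ₃ : ℂ[X], Λ₃.natDegree ≤ 3 ∧ ∀ p, L₁ p = L₀ (Λ₃ * p) := by
  refine O₀.exists_apply_eq_apply_mul hh₀ fun n hn => ?_
  obtain ⟨m, rfl⟩ : ∃ m, n = m + 2 + 2 := ⟨n - 4, by omega⟩
  have hsplit : L₁ (P₀ (m + 2 + 2)) = L₁ (polyDelta (X * P₀ (m + 2 + 2))) -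
      L₁ ((X + C 1) * polyDelta (P₀ (m + 2 + 2))) := by
    rw [polyDelta_mul_s7, polyDelta_X, X_comp, one_mul, map_add, add_sub_cancel_right]
  have hΛ₂X : (Λ₂ * X).degree < ↑(m + 2 + 2) := by
    have hle : (Λ₂ * X).natDegree ≤ 3 := natDegree_mul_le.trans (by rw [natDegree_X]; omega)
    exact (degree_le_of_natDegree_le hle).trans_lt (by exact_mod_cast (by omega : 3 < m + 2 + 2))
  have hXC : (X + C 1 : ℂ[X]).degree < ↑(m + 2) := by
    rw [degree_X_add_C]
    exact_mod_cast (by omega : 1 < m + 2)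
  rw [hsplit, rel₂, ← mul_assoc, O₀.apply_mul_eq_zero_of_degree_lt hΛ₂X,
    hcoh.apply_mul_polyDelta_eq_zero O₁ hXC, neg_zero, sub_zero]

theorem coeff_two_add_mul_coeff_three_mul_eq (hcoh : DeltaCoherent P₀ P₁ τ)
    (O₀ : IsMonicOrthogonal L₀ P₀ h₀) (O₁ : IsMonicOrthogonal L₁ P₁ h₁)
    {Λ₂ Λ₃ : ℂ[X]} (hΛ₂ : Λ₂.natDegree ≤ 2) (hΛ₃ : Λ₃.natDegree ≤ 3)
    (rel₂ : ∀ p, L₁ (polyDelta p) = -L₀ (Λ₂ * p)) (rel₃ : ∀ p, L₁ p = L₀ (Λ₃ * p)) (m : ℕ) :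
    (Λ₂.coeff 2 + m * Λ₃.coeff 3) * h₀ (m + 2) = (m + 2) * τ (m + 1) * h₁ m := by
  obtain ⟨hdeg, hcoeff⟩ := natDegree_le_and_coeff_mul_X_pow_add_mul_polyDelta hΛ₂ hΛ₃ m
  rw [← hcoeff, ← O₀.apply_mul_eq_coeff_mul hdeg, apply_mul_add_mul_polyDelta rel₂ rel₃,
    X_pow_comp, hcoh.apply_monic_mul_polyDelta O₁ ((monic_X_add_C 1).pow m)
      (natDegree_pow_X_add_C m 1), neg_neg]

end DeltaCoherent

/-- If `{L₀, L₁}` is a `Δ`-coherent pair of the second kind, then there exist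
polynomials `Λ₂, Λ₃` with `deg Λ₂ = 2`, `deg Λ₃ ≤ 3`, whose leading coefficients
satisfy `λ₂^{(2)} + (n−1)λ₃^{(3)} ≠ 0` for all `n ≥ 1`, such that
`Δ*L₁ = Λ₂L₀` and `L₁ = Λ₃L₀`. -/
theorem coherent_pair_implies_functional_relations (L₀ L₁ : Polynomial ℂ →ₗ[ℂ] ℂ)
    (P₀ P₁ : ℕ → Polynomial ℂ) (h₀ h₁ : ℕ → ℂ) (τ : ℕ → ℂ)
    (hmonic₀ : ∀ n, (P₀ n).Monic) (hdeg₀ : ∀ n, (P₀ n).natDegree = n)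
    (hmonic₁ : ∀ n, (P₁ n).Monic) (hdeg₁ : ∀ n, (P₁ n).natDegree = n)
    (hh₀ : ∀ n, h₀ n ≠ 0) (hh₁ : ∀ n, h₁ n ≠ 0)
    (horth₀ : ∀ k n, L₀ (P₀ k * P₀ n) = if k = n then h₀ n else 0)
    (horth₁ : ∀ k n, L₁ (P₁ k * P₁ n) = if k = n then h₁ n else 0)
    (hτ : ∀ n : ℕ, 1 ≤ n → τ n ≠ 0)
    (hcoh : ∀ n : ℕ, 1 ≤ n →
      polyDelta (P₀ (n + 1)) = C ((n : ℂ) + 1) * (P₁ n - C (τ n) * P₁ (n - 1))) :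
    ∃ Λ₂ Λ₃ : Polynomial ℂ,
      Λ₂.natDegree = 2 ∧ Λ₃.natDegree ≤ 3 ∧
      (∀ n : ℕ, 1 ≤ n → Λ₂.coeff 2 + ((n : ℂ) - 1) * Λ₃.coeff 3 ≠ 0) ∧
      (∀ p : Polynomial ℂ, L₁ (polyDelta p) = -(L₀ (Λ₂ * p))) ∧
      (∀ p : Polynomial ℂ, L₁ p = L₀ (Λ₃ * p)) := by
  have O₀ : IsMonicOrthogonal L₀ P₀ h₀ := ⟨hmonic₀, hdeg₀, horth₀⟩
  have O₁ : IsMonicOrthogonal L₁ P₁ h₁ := ⟨hmonic₁, hdeg₁, horth₁⟩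
  have hcoh' : DeltaCoherent P₀ P₁ τ := by
    intro m
    simpa [add_assoc, one_add_one_eq_two] using hcoh (m + 1) (by omega)
  obtain ⟨Λ₂, hΛ₂, rel₂⟩ := hcoh'.exists_apply_polyDelta_eq O₀ hh₀ O₁
  obtain ⟨Λ₃, hΛ₃, rel₃⟩ := hcoh'.exists_apply_eq O₀ hh₀ O₁ hΛ₂ rel₂
  have hne : ∀ m : ℕ, Λ₂.coeff 2 + m * Λ₃.coeff 3 ≠ 0 := fun m hzero => by
    have key := hcoh'.coeff_two_add_mul_coeff_three_mul_eq O₀ O₁ hΛ₂ hΛ₃ rel₂ rel₃ m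
    rw [hzero, zero_mul] at key
    have hm : (m : ℂ) + 2 ≠ 0 := by exact_mod_cast (m + 1).succ_ne_zero
    exact mul_ne_zero (mul_ne_zero hm (hτ (m + 1) m.succ_pos)) (hh₁ m) key.symm
  refine ⟨Λ₂, Λ₃, le_antisymm hΛ₂ (le_natDegree_of_ne_zero (by simpa using hne 0)), hΛ₃,
    fun n hn => ?_, rel₂, rel₃⟩
  obtain ⟨m, rfl⟩ := Nat.exists_eq_add_of_le' hn
  simpa using hne m
end

section
/- Case I (generalized Charlier is self-coherent of the second kind): Let z, b ∈ ℂ with z ≠ 0 and b + k ≠ 0 for every integer k ≥ 1. Define ρ : ℤ → ℂ by ρ(x) = z^x/((b+1)_x · x!) for x ≥ 0 and ρ(x) = 0 for x < 0. Then with Λ₃(x) = 1 and Λ₂(x) = x(x+b)/z − 1, one has Λ₃(x)ρ(x) − Λ₃(x−1)ρ(x−1) + Λ₂(x)ρ(x) = 0 for every integer x. -/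
/-! Dividing the Pearson equation at `x = n + 1` by `ρ(n)` leaves the ratio
`ρ(n+1)/ρ(n) = z/((n+1)(n+1+b))`, which is read off from `(b+1)_{n+1} = (b+1)_n (b+1+n)`
and `(n+1)! = n! (n+1)`; at `x ≤ 0` the equation degenerates since `ρ(x-1) = 0` and
`Λ₂(0) = -1`. -/

/-- The Pochhammer symbol `(a)_n = a(a+1)⋯(a+n−1)`. -/
noncomputable def poch (a : ℂ) (n : ℕ) : ℂ := ∏ k ∈ Finset.range n, (a + k)

theorem poch_succ (a : ℂ) (n : ℕ) : poch a (n + 1) = poch a n * (a + n) :=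
  Finset.prod_range_succ _ n

theorem poch_ne_zero {a : ℂ} {n : ℕ} (h : ∀ k < n, a + k ≠ 0) : poch a n ≠ 0 :=
  Finset.prod_ne_zero_iff.2 fun k hk => h k (Finset.mem_range.1 hk)

noncomputable def genCharlierWeight (z b : ℂ) (n : ℕ) : ℂ :=
  z ^ n / (poch (b + 1) n * n.factorial)

theorem genCharlierWeight_succ {z b : ℂ} (hz : z ≠ 0) {n : ℕ}
    (hpoch : poch (b + 1) (n + 1) ≠ 0) :
    (n + 1 : ℂ) * (n + 1 + b) / z * genCharlierWeight z b (n + 1) =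
      genCharlierWeight z b n := by
  obtain ⟨hpoch, hb⟩ := mul_ne_zero_iff.1 (poch_succ (b + 1) n ▸ hpoch)
  simp only [genCharlierWeight, poch_succ, Nat.factorial_succ, pow_succ]
  push_cast
  field_simp
  ring

/-- Case I: the generalized Charlier weight `ρ(x) = z^x/((b+1)_x x!)` satisfies the
Pearson-type equation `∇(Λ₃ρ) + Λ₂ρ = 0` with `Λ₃ = 1` and `Λ₂(x) = x(x+b)/z − 1`,
i.e. the generalized Charlier functional is self-coherent of the second kind. -/
theorem gen_charlier_self_coherent (z b : ℂ) (hz : z ≠ 0)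
    (hb : ∀ k : ℕ, 1 ≤ k → b + (k : ℂ) ≠ 0) (ρ : ℤ → ℂ)
    (hρneg : ∀ x : ℤ, x < 0 → ρ x = 0)
    (hρ : ∀ x : ℤ, 0 ≤ x →
      ρ x = z ^ x.toNat / (poch (b + 1) x.toNat * (x.toNat.factorial : ℂ))) :
    ∀ x : ℤ,
      (1 : ℂ) * ρ x - (1 : ℂ) * ρ (x - 1) +
        ((x : ℂ) * ((x : ℂ) + b) / z - 1) * ρ x = 0 := by
  have hpoch (n : ℕ) : poch (b + 1) n ≠ 0 := poch_ne_zero fun k _ => by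
    simpa [add_assoc, add_comm (1 : ℂ)] using hb (k + 1) (by omega)
  have hweight (n : ℕ) : ρ n = genCharlierWeight z b n := by
    rw [hρ n (Int.natCast_nonneg n), Int.toNat_natCast, genCharlierWeight]
  suffices h : ∀ x : ℤ, (x : ℂ) * (x + b) / z * ρ x = ρ (x - 1) by
    intro x
    linear_combination h x
  intro x
  rcases lt_or_ge x 0 with hx | hx
  · rw [hρneg x hx, hρneg (x - 1) (by omega), mul_zero]
  lift x to ℕ using hx
  cases x with
  | zero => simp [hρneg (-1) (by norm_num)]
  | succ n =>
    have h := genCharlierWeight_succ hz (hpoch (n + 1))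
    rw [← hweight, ← hweight] at h
    push_cast at h ⊢
    rwa [add_sub_cancel_right]
end
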